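/- For every $n\ge2$ there exist an enumeration $(x^n_i)_{i=1}^{i(n)}$ of $M_n\setminus D_{n-1}$ and, for every $i\in\{0,\dots,i(n)-1\}$, a retraction $\Psi_{n,i}:M_n\to D_{n-1}\cup\{x^n_1,\dots,x^n_i\}$ such that: (1) $\Psi_{n,i_1}\circ\Psi_{n,i_2}=\Psi_{n,\min(i_1,i_2)}$ for all $i_1,i_2\in\{0,\dots,i(n)-1\}$; (2) $\Psi_{n,0}=\Psi_n$; (3) every $\Psi_{n,i}$ is $K$-Lipschitz with $K=(3\lambda+2)(3\lambda^2+6\lambda+11)$, a constant independent of $i$ and $n$. -/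

import Mathlib

open Set

noncomputable section

variable {Γ : Type*} [TopologicalSpace Γ] [DiscreteTopology Γ]

/-- `ℓ∞(Γ)`: the Banach space of bounded real functions on `Γ`
(carrying the discrete topology, so that boundedness is the only constraint). -/
abbrev Linf (Γ : Type*) [TopologicalSpace Γ] [DiscreteTopology Γ] : Type _ :=
  BoundedContinuousFunction Γ ℝ

/-- The entire part of a real number, toward `0`: `[r] = sign(r)⌊|r|⌋`. -/
def ent (r : ℝ) : ℝ := Real.sign r * ⌊|r|⌋

lemma abs_ent_le (r : ℝ) : |ent r| ≤ |r| := by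
  have hsign : |Real.sign r| ≤ 1 := by
    rcases lt_trichotomy r 0 with h | h | h
    · rw [Real.sign_of_neg h]; norm_num
    · rw [h, Real.sign_zero]; norm_num
    · rw [Real.sign_of_pos h]; norm_num
  have hfl : |(⌊|r|⌋ : ℝ)| ≤ |r| := by
    rw [abs_of_nonneg (by exact_mod_cast Int.floor_nonneg.mpr (abs_nonneg r))]
    exact Int.floor_le _
  calc |ent r| = |Real.sign r| * |(⌊|r|⌋ : ℝ)| := abs_mul _ _
    _ ≤ 1 * |r| := mul_le_mul hsign hfl (abs_nonneg _) zero_le_one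
    _ = |r| := one_mul _

/-- The coordinatewise quantization `f : ℓ∞(S) → ℓ∞(S)`, `f(x)(γ) = [x(γ)]`. -/
def quant (x : Linf Γ) : Linf Γ :=
  BoundedContinuousFunction.ofNormedAddCommGroup (fun γ => ent (x γ))
    continuous_of_discreteTopology ‖x‖ (fun γ => by
      rw [Real.norm_eq_abs]
      exact (abs_ent_le (x γ)).trans (by simpa using x.norm_coe_le_norm γ))

/-- Scalar truncation at level `s`. -/
def truncFun (s t : ℝ) : ℝ := if |t| ≤ s then t else s * t / |t|

lemma abs_truncFun_le (s t : ℝ) : |truncFun s t| ≤ max |s| |t| := by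
  unfold truncFun
  split_ifs with h
  · exact le_max_right _ _
  · by_cases ht : t = 0
    · simp [ht]
    · have hst : abs (s * t / |t|) = |s| := by
        rw [abs_div, abs_mul, abs_abs, mul_div_assoc, div_self (abs_ne_zero.mpr ht), mul_one]
      rw [hst]; exact le_max_left _ _

/-- The truncation of radius `s`: `T_s(x)(γ) = x(γ)` if `|x(γ)| ≤ s`,
and `= s·x(γ)/|x(γ)|` otherwise. -/
def trunc (s : ℝ) (x : Linf Γ) : Linf Γ :=
  BoundedContinuousFunction.ofNormedAddCommGroup (fun γ => truncFun s (x γ))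
    continuous_of_discreteTopology (max |s| ‖x‖) (fun γ => by
      rw [Real.norm_eq_abs]
      exact (abs_truncFun_le s (x γ)).trans
        (max_le_max le_rfl (by simpa using x.norm_coe_le_norm γ)))

/-- The restriction operator `r_S : ℓ∞(Γ) → ℓ∞(S)`, where `ℓ∞(S)` is identified
isometrically with the subspace of `ℓ∞(Γ)` of functions vanishing off `S`. -/
def restr (S : Set Γ) (x : Linf Γ) : Linf Γ :=
  BoundedContinuousFunction.ofNormedAddCommGroup (S.indicator x)
    continuous_of_discreteTopology ‖x‖ (fun γ => by
      rw [Real.norm_eq_abs]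
      by_cases h : γ ∈ S
      · rw [Set.indicator_of_mem h]
        simpa using x.norm_coe_le_norm γ
      · rw [Set.indicator_of_notMem h]
        simp)

/-- The ball `s·B_{ℓ∞(S)}`, viewed inside `ℓ∞(Γ)`: functions supported on `S`
of norm at most `s`. -/
def suppBall (S : Set Γ) (s : ℝ) : Set (Linf Γ) :=
  {x | (∀ γ ∉ S, x γ = 0) ∧ ‖x‖ ≤ s}

/-- `chain T a b = T (a+1) ∘ ⋯ ∘ T b` (the identity if `b ≤ a`). -/
def chain {α : Type*} (T : ℕ → α → α) (a b : ℕ) : α → α :=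
  Nat.rec id (fun k ih => ih ∘ T (a + k + 1)) (b - a)

/-- Bourgain–Delbaen data on `Γ`: a strictly increasing sequence of nonempty finite
sets `Γs n` (for `n ≥ 1`) with union `Γ`, together with compatible bounded linear
extension operators `i n : ℓ∞(Γ_n) → ℓ∞(Γ)` (realized as operators on `ℓ∞(Γ)`
factoring through the restriction `restr (Γs n)`), with norms bounded by the
positive integer `lam`. -/
structure BD (Γ : Type*) [TopologicalSpace Γ] [DiscreteTopology Γ] where
  Γs : ℕ → Set Γ
  lam : ℕ
  i : ℕ → Linf Γ →L[ℝ] Linf Γ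
  one_le_lam : 1 ≤ lam
  finite : ∀ n, 1 ≤ n → (Γs n).Finite
  nonempty : ∀ n, 1 ≤ n → (Γs n).Nonempty
  ssubset : ∀ n, 1 ≤ n → Γs n ⊂ Γs (n + 1)
  iUnion_eq : ⋃ n ∈ {k : ℕ | 1 ≤ k}, Γs n = Set.univ
  extension : ∀ n, 1 ≤ n → ∀ x : Linf Γ, ∀ γ ∈ Γs n, i n x γ = x γ
  factor : ∀ n, 1 ≤ n → ∀ x : Linf Γ, i n (restr (Γs n) x) = i n x
  compatible : ∀ n m, 1 ≤ n → n < m → ∀ x : Linf Γ, i m (restr (Γs m) (i n x)) = i n x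
  norm_i_le : ∀ n, 1 ≤ n → ‖i n‖ ≤ (lam : ℝ)

namespace BD

/-- `s n = λ^n`. -/
def s (B : BD Γ) (n : ℕ) : ℝ := (B.lam : ℝ) ^ n

/-- The sets `M_n` (with `M_0 = ∅`):
`M_n = M_{n-1} ∪ (f ∘ i_n)(f(s_n B_{ℓ∞(Γ_n)}) \ r_n(M_{n-1}))`. -/
def M (B : BD Γ) : ℕ → Set (Linf Γ)
  | 0 => ∅
  | n + 1 =>
      M B n ∪
        (fun z => quant (B.i (n + 1) z)) ''
          (quant '' suppBall (B.Γs (n + 1)) (B.s (n + 1)) \ restr (B.Γs (n + 1)) '' M B n)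

/-- `M = ⋃ n, M_n`. -/
def Mtot (B : BD Γ) : Set (Linf Γ) := ⋃ n, B.M n

/-- `C_n = (f ∘ i_{n+1} ∘ f ∘ T_{s_{n+1}} ∘ r_{n+1} ∘ i_n)
(f(s_{n+1}B_{ℓ∞(Γ_n)}) \ f(s_n B_{ℓ∞(Γ_n)}))`. -/
def C (B : BD Γ) (n : ℕ) : Set (Linf Γ) :=
  (fun z => quant (B.i (n + 1) (quant (trunc (B.s (n + 1)) (restr (B.Γs (n + 1)) (B.i n z)))))) ''
    (quant '' suppBall (B.Γs n) (B.s (n + 1)) \ quant '' suppBall (B.Γs n) (B.s n))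

/-- `D_n = M_n ∪ C_n`. -/
def D (B : BD Γ) (n : ℕ) : Set (Linf Γ) := B.M n ∪ B.C n

end BD

/-!
For `n = m + 1`, `Ψ_n z` is the point of `D_m` with the same `Γ_m`-coordinates as `z`. Each
`z ∈ M_n` is joined to `Ψ_n z` by a discrete path: its point of level `c ≥ 1` is `f(i_n v_c)`,
where `v_c` is obtained from the `Γ_n`-coordinates of `z` by clamping them to within `c` of those
of `Ψ_n z`. For `1 ≤ c ≤ μ(z) := ⌈‖r_n z - r_n Ψ_n z‖⌉` these points lie in `M_n \ D_{n-1}` and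
have weight `μ = c`, and the path of a path point is an initial segment of the original path.
Enumerating `M_n \ D_{n-1}` by increasing weight, `Ψ_{n,i}` moves a point along its path to the
last point lying in `D_{n-1} ∪ {x_1, …, x_i}`. The sorting forces the stopping levels of two
points to differ by at most one, and the path points depend `λ`-Lipschitz on `z`, on `Ψ_n z` and
on the level; since distinct points of `M_n` are at distance at least one, the additive constants
are absorbed into `K`.
-/

/-! ### Entire parts and clamping of reals -/

lemma ent_intCast (k : ℤ) : ent k = k := by
  unfold ent
  rcases lt_trichotomy (k : ℝ) 0 with h | h | h
  · rw [Real.sign_of_neg h, abs_of_neg h, ← Int.cast_neg, Int.floor_intCast]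
    push_cast; ring
  · simp [h]
  · rw [Real.sign_of_pos h, abs_of_pos h, Int.floor_intCast, one_mul]

@[simp] lemma ent_zero : ent 0 = 0 := by simp [ent]

lemma exists_ent_eq_intCast (r : ℝ) : ∃ k : ℤ, ent r = k := by
  unfold ent
  rcases lt_trichotomy r 0 with h | h | h
  · exact ⟨-⌊|r|⌋, by rw [Real.sign_of_neg h]; push_cast; ring⟩
  · exact ⟨0, by simp [h]⟩
  · exact ⟨⌊|r|⌋, by rw [Real.sign_of_pos h, one_mul]⟩

lemma abs_ent_sub_self_le (r : ℝ) : |ent r - r| ≤ 1 := by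
  unfold ent
  rcases lt_trichotomy r 0 with h | h | h
  · rw [Real.sign_of_neg h, abs_of_neg h, abs_le]
    constructor <;> linarith [Int.floor_le (-r), Int.lt_floor_add_one (-r)]
  · simp [h]
  · rw [Real.sign_of_pos h, abs_of_pos h, one_mul, abs_le]
    constructor <;> linarith [Int.floor_le r, Int.lt_floor_add_one r]

lemma abs_ent_sub_ent_le (a b : ℝ) : |ent a - ent b| ≤ |a - b| + 2 := by
  have := abs_sub (ent a - a) (ent b - b)
  calc |ent a - ent b| = |(ent a - a) - (ent b - b) + (a - b)| := by ring_nf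
    _ ≤ |(ent a - a) - (ent b - b)| + |a - b| := abs_add_le _ _
    _ ≤ |a - b| + 2 := by linarith [abs_ent_sub_self_le a, abs_ent_sub_self_le b]

def clampNear (a b c : ℝ) : ℝ := max (b - c) (min (b + c) a)

lemma abs_clampNear_sub_le_abs (a b c : ℝ) : |clampNear a b c - b| ≤ |c| := by
  unfold clampNear
  rcases le_total 0 c with h | h <;> simp only [abs_le, abs_of_nonneg, abs_of_nonpos, h] <;>
    constructor <;> grind

lemma abs_clampNear_le_max {a b c : ℝ} (hc : 0 ≤ c) : |clampNear a b c| ≤ max |a| |b| := by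
  unfold clampNear; rw [abs_le]; constructor <;> grind [abs_le, le_abs_self, neg_abs_le]

lemma clampNear_eq_self {a b c : ℝ} (h : |a - b| ≤ c) : clampNear a b c = a := by
  unfold clampNear; rw [abs_le] at h; grind

lemma abs_clampNear_sub_eq {a b c : ℝ} (hc : 0 ≤ c) (h : c ≤ |a - b|) :
    |clampNear a b c - b| = c := by
  unfold clampNear
  rcases abs_cases (a - b) with ⟨he, -⟩ | ⟨he, -⟩ <;> rw [he] at h <;> grind

lemma clampNear_clampNear {a b c c' : ℝ} (hc : 0 ≤ c) (hcc : c ≤ c') :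
    clampNear (clampNear a b c') b c = clampNear a b c := by
  unfold clampNear; grind

lemma clampNear_zero (a b : ℝ) : clampNear a b 0 = b := by
  unfold clampNear; grind

lemma clampNear_intCast (a b c : ℤ) :
    clampNear a b c = ((max (b - c) (min (b + c) a) : ℤ) : ℝ) := by
  unfold clampNear; push_cast; rfl

lemma abs_clampNear_sub_clampNear_le (a a' b b' c c' : ℝ) :
    |clampNear a b c - clampNear a' b' c'| ≤ |a - a'| + |b - b'| + |c - c'| := by
  unfold clampNear
  refine (abs_max_sub_max_le_max _ _ _ _).trans
    (max_le ?_ ((abs_min_sub_min_le_max _ _ _ _).trans (max_le ?_ ?_)))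
  · have := abs_sub (b - b') (c - c'); grind [abs_nonneg]
  · have := abs_add_le (b - b') (c - c'); grind [abs_nonneg]
  · grind [abs_nonneg]

lemma truncFun_eq_clampNear {s : ℝ} (hs : 0 ≤ s) (t : ℝ) : truncFun s t = clampNear t 0 s := by
  unfold truncFun clampNear
  split_ifs with h
  · rw [abs_le] at h; grind
  · rcases lt_or_gt_of_ne (show t ≠ 0 by rintro rfl; simp at h; linarith) with ht | ht
    · rw [abs_of_neg ht] at h ⊢; field_simp; grind
    · rw [abs_of_pos ht] at h ⊢; field_simp; grind

lemma abs_natCast_sub_natCast_le_one {a b : ℕ} (hab : a ≤ b + 1) (hba : b ≤ a + 1) :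
    |(a : ℝ) - b| ≤ 1 := by
  rw [abs_sub_le_iff]
  constructor <;> linarith [(by exact_mod_cast hab : (a : ℝ) ≤ b + 1),
    (by exact_mod_cast hba : (b : ℝ) ≤ a + 1)]

/-! ### Quantization, restriction and truncation in `ℓ∞(Γ)` -/

@[simp] lemma quant_apply (x : Linf Γ) (γ : Γ) : quant x γ = ent (x γ) := rfl

@[simp] lemma restr_apply (S : Set Γ) (x : Linf Γ) (γ : Γ) : restr S x γ = S.indicator x γ := rfl

@[simp] lemma trunc_apply (s : ℝ) (x : Linf Γ) (γ : Γ) : trunc s x γ = truncFun s (x γ) := rfl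

lemma restr_apply_of_mem {S : Set Γ} (x : Linf Γ) {γ : Γ} (hγ : γ ∈ S) : restr S x γ = x γ :=
  indicator_of_mem hγ x

lemma restr_apply_of_notMem {S : Set Γ} (x : Linf Γ) {γ : Γ} (hγ : γ ∉ S) : restr S x γ = 0 :=
  indicator_of_notMem hγ x

lemma norm_le_of_forall_abs_apply_le {x : Linf Γ} {C : ℝ} (hC : 0 ≤ C) (h : ∀ γ, |x γ| ≤ C) :
    ‖x‖ ≤ C :=
  (BoundedContinuousFunction.norm_le hC).2 h

lemma abs_apply_le_norm (x : Linf Γ) (γ : Γ) : |x γ| ≤ ‖x‖ := x.norm_coe_le_norm γ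

lemma abs_apply_sub_le_norm (x y : Linf Γ) (γ : Γ) : |x γ - y γ| ≤ ‖x - y‖ :=
  abs_apply_le_norm (x - y) γ

def IsIntValued (x : Linf Γ) : Prop := ∀ γ, ∃ k : ℤ, x γ = k

lemma isIntValued_quant (x : Linf Γ) : IsIntValued (quant x) := fun _ => exists_ent_eq_intCast _

lemma IsIntValued.quant_eq {x : Linf Γ} (hx : IsIntValued x) : quant x = x := by
  ext γ
  obtain ⟨k, hk⟩ := hx γ
  rw [quant_apply, hk, ent_intCast]

lemma IsIntValued.restr {x : Linf Γ} (hx : IsIntValued x) (S : Set Γ) :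
    IsIntValued (restr S x) := by
  intro γ
  by_cases h : γ ∈ S
  · rw [restr_apply_of_mem _ h]; exact hx γ
  · exact ⟨0, by rw [restr_apply_of_notMem _ h, Int.cast_zero]⟩

lemma IsIntValued.sub {x y : Linf Γ} (hx : IsIntValued x) (hy : IsIntValued y) :
    IsIntValued (x - y) := by
  intro γ
  obtain ⟨k, hk⟩ := hx γ
  obtain ⟨l, hl⟩ := hy γ
  exact ⟨k - l, by rw [BoundedContinuousFunction.sub_apply, hk, hl, Int.cast_sub]⟩

lemma norm_quant_le (x : Linf Γ) : ‖quant x‖ ≤ ‖x‖ :=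
  norm_le_of_forall_abs_apply_le (norm_nonneg x) fun γ =>
    (abs_ent_le (x γ)).trans (abs_apply_le_norm x γ)

lemma norm_quant_sub_self_le (x : Linf Γ) : ‖quant x - x‖ ≤ 1 :=
  norm_le_of_forall_abs_apply_le zero_le_one fun γ => abs_ent_sub_self_le (x γ)

lemma norm_quant_sub_quant_le (x y : Linf Γ) : ‖quant x - quant y‖ ≤ ‖x - y‖ + 2 :=
  norm_le_of_forall_abs_apply_le (by positivity) fun γ =>
    (abs_ent_sub_ent_le (x γ) (y γ)).trans (by linarith [abs_apply_sub_le_norm x y γ])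

lemma restr_sub (S : Set Γ) (x y : Linf Γ) : restr S x - restr S y = restr S (x - y) := by
  ext γ
  by_cases h : γ ∈ S <;> simp [h]

lemma norm_restr_le (S : Set Γ) (x : Linf Γ) : ‖restr S x‖ ≤ ‖x‖ :=
  norm_le_of_forall_abs_apply_le (norm_nonneg x) fun γ => by
    by_cases h : γ ∈ S
    · rw [restr_apply_of_mem _ h]; exact abs_apply_le_norm x γ
    · rw [restr_apply_of_notMem _ h, abs_zero]; exact norm_nonneg x

lemma norm_restr_sub_restr_le (S : Set Γ) (x y : Linf Γ) :
    ‖restr S x - restr S y‖ ≤ ‖x - y‖ :=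
  restr_sub S x y ▸ norm_restr_le S (x - y)

lemma restr_restr {S T : Set Γ} (hST : S ⊆ T) (x : Linf Γ) :
    restr S (restr T x) = restr S x := by
  ext γ
  by_cases h : γ ∈ S
  · rw [restr_apply_of_mem _ h, restr_apply_of_mem _ h, restr_apply_of_mem _ (hST h)]
  · rw [restr_apply_of_notMem _ h, restr_apply_of_notMem _ h]

lemma restr_quant (S : Set Γ) (x : Linf Γ) : restr S (quant x) = quant (restr S x) := by
  ext γ
  by_cases h : γ ∈ S
  · simp [h]
  · simp [h]

lemma one_le_norm_sub_of_isIntValued {x y : Linf Γ} (hx : IsIntValued x) (hy : IsIntValued y)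
    (hne : x ≠ y) : 1 ≤ ‖x - y‖ := by
  obtain ⟨γ, hγ⟩ : ∃ γ, x γ ≠ y γ := by
    by_contra! h
    exact hne (BoundedContinuousFunction.ext h)
  obtain ⟨k, hk⟩ := hx γ
  obtain ⟨l, hl⟩ := hy γ
  rw [hk, hl, Ne, Int.cast_inj] at hγ
  have : (1 : ℝ) ≤ |(k : ℝ) - l| := by
    rw [← Int.cast_sub, ← Int.cast_abs]
    exact_mod_cast Int.one_le_abs (sub_ne_zero.2 hγ)
  exact this.trans (hk ▸ hl ▸ abs_apply_sub_le_norm x y γ)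

lemma exists_le_abs_apply_of_isIntValued {x : Linf Γ} (hx : IsIntValued x) {k : ℕ}
    (hk : 1 ≤ k) (h : (k : ℝ) - 1 < ‖x‖) : ∃ γ, (k : ℝ) ≤ |x γ| := by
  by_contra! hc
  refine h.not_ge (norm_le_of_forall_abs_apply_le (by simp [hk]) fun γ => ?_)
  obtain ⟨l, hl⟩ := hx γ
  have hlt := hc γ
  rw [hl, ← Int.cast_abs] at hlt ⊢
  have : |l| < k := by exact_mod_cast hlt
  have : |l| ≤ (k : ℤ) - 1 := by omega
  exact_mod_cast this

def intBall (S : Set Γ) (s : ℝ) : Set (Linf Γ) :=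
  {x | IsIntValued x ∧ (∀ γ ∉ S, x γ = 0) ∧ ‖x‖ ≤ s}

lemma quant_image_suppBall (S : Set Γ) (s : ℝ) : quant '' suppBall S s = intBall S s := by
  ext x
  constructor
  · rintro ⟨y, ⟨hy0, hyn⟩, rfl⟩
    refine ⟨isIntValued_quant y, fun γ hγ => ?_, (norm_quant_le y).trans hyn⟩
    simp [hy0 γ hγ]
  · rintro ⟨hint, h0, hn⟩
    exact ⟨x, ⟨h0, hn⟩, hint.quant_eq⟩

lemma intBall_finite {S : Set Γ} (hS : S.Finite) (s : ℝ) : (intBall S s).Finite := by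
  have : Finite S := hS.to_subtype
  have hval : ∀ x : intBall S s, ∀ γ : S, ⌊(x : Linf Γ) γ⌋ ∈ Icc (-⌈s⌉) ⌈s⌉ := by
    rintro ⟨x, hint, -, hnorm⟩ γ
    obtain ⟨k, hk⟩ := hint γ
    rw [hk, Int.floor_intCast, mem_Icc, ← abs_le]
    have : |(k : ℝ)| ≤ ⌈s⌉ := hk ▸ (abs_apply_le_norm x γ).trans (hnorm.trans (Int.le_ceil s))
    exact_mod_cast this
  have : Finite (Icc (-⌈s⌉) ⌈s⌉) := (finite_Icc _ _).to_subtype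
  refine Set.finite_coe_iff.1 (Finite.of_injective
    (fun x : intBall S s => fun γ : S => (⟨_, hval x γ⟩ : Icc (-⌈s⌉) ⌈s⌉)) ?_)
  rintro ⟨x, hx⟩ ⟨y, hy⟩ h
  ext γ
  by_cases hγ : γ ∈ S
  · have := congrArg Subtype.val (congrFun h ⟨γ, hγ⟩)
    obtain ⟨k, hk⟩ := hx.1 γ
    obtain ⟨l, hl⟩ := hy.1 γ
    simp only [hk, hl, Int.floor_intCast] at this
    rw [hk, hl, this]
  · rw [hx.2.1 γ hγ, hy.2.1 γ hγ]

lemma norm_trunc_le {s : ℝ} (hs : 0 ≤ s) (x : Linf Γ) : ‖trunc s x‖ ≤ s :=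
  norm_le_of_forall_abs_apply_le hs fun γ => by
    simpa [truncFun_eq_clampNear hs, abs_of_nonneg hs] using
      abs_clampNear_sub_le_abs (x γ) 0 s

lemma norm_trunc_sub_trunc_le {s : ℝ} (hs : 0 ≤ s) (x y : Linf Γ) :
    ‖trunc s x - trunc s y‖ ≤ ‖x - y‖ :=
  norm_le_of_forall_abs_apply_le (norm_nonneg _) fun γ => by
    simpa [truncFun_eq_clampNear hs] using
      (abs_clampNear_sub_clampNear_le (x γ) (y γ) 0 0 s s).trans
        (by simpa using abs_apply_sub_le_norm x y γ)

lemma trunc_eq_self {s : ℝ} {x : Linf Γ} (hx : ‖x‖ ≤ s) : trunc s x = x := by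
  ext γ
  exact if_pos ((abs_apply_le_norm x γ).trans hx)

namespace Linf

def clampNear (x y : Linf Γ) (c : ℝ) : Linf Γ :=
  BoundedContinuousFunction.ofNormedAddCommGroup (fun γ => _root_.clampNear (x γ) (y γ) c)
    continuous_of_discreteTopology (‖y‖ + |c|) fun γ => by
      have := abs_clampNear_sub_le_abs (x γ) (y γ) c
      have := abs_apply_le_norm y γ
      rw [Real.norm_eq_abs]
      calc _ = |_root_.clampNear (x γ) (y γ) c - y γ + y γ| := by ring_nf
        _ ≤ _ := (abs_add_le _ _).trans (by linarith)

variable {x y x' y' : Linf Γ} {c c' : ℝ}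

@[simp] lemma clampNear_apply (γ : Γ) : clampNear x y c γ = _root_.clampNear (x γ) (y γ) c := rfl

lemma clampNear_apply_of_apply_eq (hc : 0 ≤ c) {γ : Γ} (h : x γ = y γ) :
    clampNear x y c γ = x γ :=
  _root_.clampNear_eq_self (by simpa [h] using hc)

lemma norm_clampNear_sub_le (hc : 0 ≤ c) : ‖clampNear x y c - y‖ ≤ c :=
  norm_le_of_forall_abs_apply_le hc fun _ =>
    (abs_clampNear_sub_le_abs _ _ c).trans_eq (abs_of_nonneg hc)

lemma norm_clampNear_le {s : ℝ} (hc : 0 ≤ c) (hx : ‖x‖ ≤ s) (hy : ‖y‖ ≤ s) :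
    ‖clampNear x y c‖ ≤ s :=
  norm_le_of_forall_abs_apply_le ((norm_nonneg x).trans hx) fun γ =>
    (abs_clampNear_le_max hc).trans
      (max_le ((abs_apply_le_norm x γ).trans hx) ((abs_apply_le_norm y γ).trans hy))

lemma norm_clampNear_sub_clampNear_le :
    ‖clampNear x y c - clampNear x' y' c'‖ ≤ ‖x - x'‖ + ‖y - y'‖ + |c - c'| :=
  norm_le_of_forall_abs_apply_le (by positivity) fun γ =>
    (abs_clampNear_sub_clampNear_le _ _ _ _ _ _).trans (by
      linarith [abs_apply_sub_le_norm x x' γ, abs_apply_sub_le_norm y y' γ])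

lemma clampNear_eq_self (h : ‖x - y‖ ≤ c) : clampNear x y c = x := by
  ext γ
  exact _root_.clampNear_eq_self ((abs_apply_sub_le_norm x y γ).trans h)

lemma clampNear_clampNear (hc : 0 ≤ c) (hcc : c ≤ c') :
    clampNear (clampNear x y c') y c = clampNear x y c := by
  ext γ
  exact _root_.clampNear_clampNear hc hcc

lemma clampNear_zero : clampNear x y 0 = y := by
  ext γ
  exact _root_.clampNear_zero _ _

lemma exists_abs_clampNear_sub_eq (hxy : IsIntValued (x - y)) {c : ℕ} (hc : 1 ≤ c)
    (h : (c : ℝ) - 1 < ‖x - y‖) : ∃ γ, |clampNear x y c γ - y γ| = c := by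
  obtain ⟨γ, hγ⟩ := exists_le_abs_apply_of_isIntValued hxy hc h
  exact ⟨γ, abs_clampNear_sub_eq (Nat.cast_nonneg c) hγ⟩

end Linf

lemma IsIntValued.clampNear {x y : Linf Γ} (hx : IsIntValued x) (hy : IsIntValued y) (c : ℕ) :
    IsIntValued (Linf.clampNear x y c) := fun γ => by
  obtain ⟨k, hk⟩ := hx γ
  obtain ⟨l, hl⟩ := hy γ
  exact ⟨_, by rw [Linf.clampNear_apply, hk, hl, ← Int.cast_natCast, clampNear_intCast]⟩

/-! ### Retractions along weighted paths -/

lemma Set.Finite.exists_enum_monotoneOn {α : Type*} [Nonempty α] {X : Set α} (hX : X.Finite)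
    (μ : α → ℕ) :
    ∃ (N : ℕ) (x : ℕ → α), InjOn x (Icc 1 N) ∧ x '' Icc 1 N = X ∧
      MonotoneOn (μ ∘ x) (Icc 1 N) := by
  classical
  obtain ⟨s, rfl⟩ := hX.exists_finset_coe
  induction s using Finset.induction_on_max_value μ with
  | empty => exact ⟨0, fun _ => Classical.arbitrary α, by simp, by simp, by simp [MonotoneOn]⟩
  | insert a s ha hmax ih =>
    obtain ⟨N, x, hinj, himg, hmono⟩ := ih (Finset.finite_toSet s)
    have hx : ∀ j ∈ Icc 1 N, x j ∈ s := fun j hj => by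
      rw [← Finset.mem_coe, ← himg]; exact mem_image_of_mem x hj
    have hIcc : Icc 1 (N + 1) = insert (N + 1) (Icc 1 N) := by
      ext j; simp only [mem_Icc, mem_insert_iff]; omega
    have hne : ∀ j ∈ Icc 1 N, j ≠ N + 1 := fun j hj => by grind
    refine ⟨N + 1, fun j => if j = N + 1 then a else x j, ?_, ?_, ?_⟩
    · rw [hIcc]
      refine (injOn_insert (by simp)).2 ⟨hinj.congr fun j hj => by simp [hne j hj], ?_⟩
      rintro ⟨j, hj, hja⟩
      simp only [hne j hj, if_false, if_pos] at hja
      exact ha (hja ▸ hx j hj)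
    · rw [hIcc, image_insert_eq, Finset.coe_insert, ← himg, if_pos rfl]
      exact congrArg _ (image_congr fun j hj => by simp [hne j hj])
    · intro j hj k hk hjk
      rw [hIcc] at hj hk
      rcases hk with rfl | hk
      · rcases hj with rfl | hj
        · exact le_rfl
        · simpa [hne j hj] using hmax _ (hx j hj)
      · rcases hj with rfl | hj
        · grind
        · simpa [hne j hj, hne k hk] using hmono hj hk hjk

section PathRetraction

variable {α : Type*}

open Classical

structure IsRetractionPath (D M : Set α) (P : α → ℕ → α) (μ : α → ℕ) : Prop where
  start_mem : ∀ z ∈ M, P z 0 ∈ D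
  start_eq_self : ∀ z ∈ D, P z 0 = z
  mem_of_pos : ∀ z ∈ M \ D, ∀ c, 0 < c → c ≤ μ z → P z c ∈ M \ D
  weight_eq : ∀ z ∈ M \ D, ∀ c, 0 < c → c ≤ μ z → μ (P z c) = c
  path_path : ∀ z ∈ M \ D, ∀ c c', 0 < c → c ≤ μ z → c' ≤ c → P (P z c) c' = P z c'

structure IsSortedFiltration (D M : Set α) (μ : α → ℕ) (F : ℕ → Set α) : Prop where
  zero : F 0 = D
  mono : Monotone F
  weight_le : ∀ i, ∀ p ∈ F i \ D, ∀ w ∈ M \ F i, μ p ≤ μ w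

variable (P : α → ℕ → α) (μ : α → ℕ) (F : ℕ → Set α)

def stopLevel (i : ℕ) (z : α) : ℕ := Nat.findGreatest (fun c => P z c ∈ F i) (μ z)

def pathRetraction (i : ℕ) (z : α) : α := if z ∈ F i then z else P z (stopLevel P μ F i z)

variable {P μ F} {D M : Set α} {i : ℕ} {z : α}

lemma IsSortedFiltration.subset (hF : IsSortedFiltration D M μ F) (i : ℕ) : D ⊆ F i :=
  hF.zero ▸ hF.mono (Nat.zero_le i)

lemma stopLevel_le : stopLevel P μ F i z ≤ μ z := Nat.findGreatest_le _

lemma le_stopLevel {c : ℕ} (hc : c ≤ μ z) (h : P z c ∈ F i) : c ≤ stopLevel P μ F i z :=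
  Nat.le_findGreatest hc h

lemma path_stopLevel_succ_notMem (h : stopLevel P μ F i z < μ z) :
    P z (stopLevel P μ F i z + 1) ∉ F i :=
  Nat.findGreatest_is_greatest (Nat.lt_succ_self _) h

lemma path_stopLevel_mem (hP : IsRetractionPath D M P μ) (hF : IsSortedFiltration D M μ F)
    (hz : z ∈ M) : P z (stopLevel P μ F i z) ∈ F i :=
  Nat.findGreatest_spec (P := fun c => P z c ∈ F i) (Nat.zero_le _)
    (hF.subset i (hP.start_mem z hz))

lemma pathRetraction_of_mem (h : z ∈ F i) : pathRetraction P μ F i z = z := if_pos h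

lemma pathRetraction_of_notMem (h : z ∉ F i) :
    pathRetraction P μ F i z = P z (stopLevel P μ F i z) := if_neg h

lemma isSortedFiltration_of_enum {N : ℕ} {x : ℕ → α}
    (himg : x '' Icc 1 N = M \ D) (hmono : MonotoneOn (μ ∘ x) (Icc 1 N)) :
    IsSortedFiltration D M μ (fun i => D ∪ x '' Icc 1 i) where
  zero := by simp
  mono _ _ hij := union_subset_union_right _ (image_mono (Icc_subset_Icc_right hij))
  weight_le := by
    rintro i p ⟨hp | ⟨a, ha, rfl⟩, hpD⟩ w ⟨hwM, hwF⟩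
    · exact absurd hp hpD
    have hwD : w ∉ D := fun h => hwF (Or.inl h)
    obtain ⟨b, hb, rfl⟩ : w ∈ x '' Icc 1 N := himg ▸ ⟨hwM, hwD⟩
    have hib : i < b := by
      by_contra! h
      exact hwF (Or.inr ⟨b, ⟨hb.1, h⟩, rfl⟩)
    exact hmono ⟨ha.1, by grind⟩ hb (by grind)

section

variable (hP : IsRetractionPath D M P μ) (hF : IsSortedFiltration D M μ F)
include hP hF

lemma pathRetraction_mem (hz : z ∈ M) : pathRetraction P μ F i z ∈ F i := by
  by_cases h : z ∈ F i
  · rwa [pathRetraction_of_mem h]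
  · rw [pathRetraction_of_notMem h]
    exact path_stopLevel_mem hP hF hz

lemma pathRetraction_zero (hz : z ∈ M) : pathRetraction P μ F 0 z = P z 0 := by
  by_cases h : z ∈ F 0
  · rw [pathRetraction_of_mem h, hP.start_eq_self z (hF.zero ▸ h)]
  · have hzD : z ∈ M \ D := ⟨hz, hF.zero ▸ h⟩
    suffices stopLevel P μ F 0 z = 0 by rw [pathRetraction_of_notMem h, this]
    by_contra hc
    have := hP.mem_of_pos z hzD _ (Nat.pos_of_ne_zero hc) stopLevel_le
    exact this.2 (hF.zero ▸ path_stopLevel_mem hP hF hz)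

lemma stopLevel_path (hz : z ∈ M \ D) {c : ℕ} (hc : 0 < c) (hcμ : c ≤ μ z)
    (hle : stopLevel P μ F i z ≤ c) :
    stopLevel P μ F i (P z c) = stopLevel P μ F i z := by
  have hμ : μ (P z c) = c := hP.weight_eq z hz c hc hcμ
  have hpath := hP.path_path z hz c
  apply le_antisymm
  · have h₁ : stopLevel P μ F i (P z c) ≤ c := stopLevel_le.trans_eq hμ
    have h₂ := path_stopLevel_mem hP hF (i := i) (hP.mem_of_pos z hz c hc hcμ).1
    rw [hpath _ hc hcμ h₁] at h₂
    exact le_stopLevel (h₁.trans hcμ) h₂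
  · refine le_stopLevel (hμ.symm ▸ hle) ?_
    rw [hpath _ hc hcμ hle]
    exact path_stopLevel_mem hP hF hz.1

lemma pathRetraction_pathRetraction {i₁ i₂ : ℕ} (hz : z ∈ M) :
    pathRetraction P μ F i₁ (pathRetraction P μ F i₂ z) =
      pathRetraction P μ F (min i₁ i₂) z := by
  by_cases hz₂ : z ∈ F i₂
  · rw [pathRetraction_of_mem hz₂]
    rcases le_total i₁ i₂ with h | h
    · rw [min_eq_left h]
    · rw [min_eq_right h, pathRetraction_of_mem (hF.mono h hz₂), pathRetraction_of_mem hz₂]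
  have hp₂ := path_stopLevel_mem hP hF (i := i₂) hz
  rcases le_total i₂ i₁ with h | h
  · rw [min_eq_right h, pathRetraction_of_notMem hz₂, pathRetraction_of_mem (hF.mono h hp₂)]
  rw [min_eq_left h, pathRetraction_of_notMem hz₂]
  set c₂ := stopLevel P μ F i₂ z
  have hz₁ : z ∉ F i₁ := fun h' => hz₂ (hF.mono h h')
  have hzD : z ∈ M \ D := ⟨hz, fun h' => hz₂ (hF.subset i₂ h')⟩
  rw [pathRetraction_of_notMem hz₁]
  set c₁ := stopLevel P μ F i₁ z
  have hc₁₂ : c₁ ≤ c₂ := le_stopLevel stopLevel_le (hF.mono h (path_stopLevel_mem hP hF hz))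
  by_cases hp₁ : P z c₂ ∈ F i₁
  · rw [pathRetraction_of_mem hp₁, le_antisymm hc₁₂ (le_stopLevel stopLevel_le hp₁)]
  have hc₂ : 0 < c₂ := Nat.pos_of_ne_zero fun h0 =>
    hp₁ (hF.subset i₁ (h0 ▸ hP.start_mem z hz))
  rw [pathRetraction_of_notMem hp₁, stopLevel_path hP hF hzD hc₂ stopLevel_le hc₁₂,
    hP.path_path z hzD c₂ c₁ hc₂ stopLevel_le hc₁₂]

lemma weight_le_stopLevel_succ {w p : α} (hw : w ∈ M \ F i) (hp : p ∈ F i \ D) :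
    μ p ≤ stopLevel P μ F i w + 1 := by
  have hwD : w ∈ M \ D := ⟨hw.1, fun h => hw.2 (hF.subset i h)⟩
  rcases lt_or_ge (stopLevel P μ F i w) (μ w) with hlt | hge
  · have hc : stopLevel P μ F i w + 1 ≤ μ w := hlt
    have hmem := hP.mem_of_pos w hwD _ (Nat.add_one_pos _) hc
    rw [← hP.weight_eq w hwD _ (Nat.add_one_pos _) hc]
    exact hF.weight_le i p hp _ ⟨hmem.1, path_stopLevel_succ_notMem hlt⟩
  · exact (hF.weight_le i p hp w hw).trans (hge.trans (Nat.le_succ _))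

lemma stopLevel_le_stopLevel_succ {w : α} (hz : z ∈ M \ F i) (hw : w ∈ M \ F i) :
    stopLevel P μ F i z ≤ stopLevel P μ F i w + 1 := by
  rcases Nat.eq_zero_or_pos (stopLevel P μ F i z) with h0 | hpos
  · omega
  have hzD : z ∈ M \ D := ⟨hz.1, fun h => hz.2 (hF.subset i h)⟩
  have hμ := hP.weight_eq z hzD _ hpos stopLevel_le
  rw [← hμ]
  exact weight_le_stopLevel_succ hP hF hw
    ⟨path_stopLevel_mem hP hF hz.1, (hP.mem_of_pos z hzD _ hpos stopLevel_le).2⟩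

end

end PathRetraction

/-! ### The sets `M_n`, `C_n` and `D_n` -/

namespace BD

variable (B : BD Γ) {m : ℕ}

lemma one_le_lam_cast : (1 : ℝ) ≤ B.lam := by exact_mod_cast B.one_le_lam

lemma s_nonneg (k : ℕ) : 0 ≤ B.s k := pow_nonneg (Nat.cast_nonneg _) k

lemma s_mono {j k : ℕ} (h : j ≤ k) : B.s j ≤ B.s k := pow_le_pow_right₀ B.one_le_lam_cast h

lemma s_succ (k : ℕ) : B.s (k + 1) = B.lam * B.s k := pow_succ' _ k

lemma norm_i_apply_le {l : ℕ} (hl : 1 ≤ l) (x : Linf Γ) : ‖B.i l x‖ ≤ B.lam * ‖x‖ :=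
  (B.i l).le_of_opNorm_le (B.norm_i_le l hl) x

lemma Γs_subset_Γs {j k : ℕ} (hj : 1 ≤ j) (hjk : j ≤ k) : B.Γs j ⊆ B.Γs k := by
  induction k, hjk using Nat.le_induction with
  | base => rfl
  | succ k hjk ih => exact ih.trans (B.ssubset k (hj.trans hjk)).subset

lemma restr_i_of_support {l : ℕ} (hl : 1 ≤ l) {b : Linf Γ} (hb : ∀ γ ∉ B.Γs l, b γ = 0) :
    restr (B.Γs l) (B.i l b) = b := by
  ext γ
  by_cases h : γ ∈ B.Γs l
  · rw [restr_apply_of_mem _ h, B.extension l hl b γ h]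
  · rw [restr_apply_of_notMem _ h, hb γ h]

lemma restr_quant_i {l : ℕ} (hl : 1 ≤ l) {b : Linf Γ} {r : ℝ} (hb : b ∈ intBall (B.Γs l) r) :
    restr (B.Γs l) (quant (B.i l b)) = b := by
  rw [restr_quant, B.restr_i_of_support hl hb.2.1, hb.1.quant_eq]

lemma i_restr_i {l k : ℕ} (hl : 1 ≤ l) (hlk : l ≤ k) {b : Linf Γ}
    (hb : ∀ γ ∉ B.Γs l, b γ = 0) : B.i k (restr (B.Γs k) (B.i l b)) = B.i l b := by
  rcases hlk.lt_or_eq with h | rfl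
  · exact B.compatible l k hl h b
  · rw [B.restr_i_of_support hl hb]

lemma M_mono : Monotone B.M := monotone_nat_of_le_succ fun _ => subset_union_left

lemma quant_i_mem_M_succ {k : ℕ} {b : Linf Γ} (hb : b ∈ intBall (B.Γs (k + 1)) (B.s (k + 1)))
    (hfresh : b ∉ restr (B.Γs (k + 1)) '' B.M k) : quant (B.i (k + 1) b) ∈ B.M (k + 1) :=
  Or.inr ⟨b, ⟨(quant_image_suppBall (B.Γs (k + 1)) _).symm ▸ hb, hfresh⟩, rfl⟩

lemma exists_of_mem_M_succ {k : ℕ} {z : Linf Γ} (hz : z ∈ B.M (k + 1)) (hz' : z ∉ B.M k) :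
    ∃ b ∈ intBall (B.Γs (k + 1)) (B.s (k + 1)),
      b ∉ restr (B.Γs (k + 1)) '' B.M k ∧ z = quant (B.i (k + 1) b) := by
  obtain hz | ⟨b, ⟨hb, hfresh⟩, rfl⟩ := hz
  · exact absurd hz hz'
  · exact ⟨b, quant_image_suppBall (B.Γs (k + 1)) _ ▸ hb, hfresh, rfl⟩

lemma exists_fresh_rep {k : ℕ} {z : Linf Γ} (hz : z ∈ B.M k) :
    ∃ l b, 1 ≤ l ∧ l ≤ k ∧ z ∈ B.M l ∧ b ∈ intBall (B.Γs l) (B.s l) ∧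
      b ∉ restr (B.Γs l) '' B.M (l - 1) ∧ z = quant (B.i l b) := by
  induction k with
  | zero => exact absurd hz (notMem_empty z)
  | succ k ih =>
    by_cases hzk : z ∈ B.M k
    · obtain ⟨l, b, hl, hlk, hzl, hb⟩ := ih hzk
      exact ⟨l, b, hl, hlk.trans k.le_succ, hzl, hb⟩
    · obtain ⟨b, hb, hfresh, rfl⟩ := B.exists_of_mem_M_succ hz hzk
      exact ⟨k + 1, b, le_add_self, le_rfl, hz, hb, hfresh, rfl⟩

lemma isIntValued_of_mem_M {k : ℕ} {z : Linf Γ} (hz : z ∈ B.M k) : IsIntValued z := by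
  obtain ⟨l, b, -, -, -, -, -, rfl⟩ := B.exists_fresh_rep hz
  exact isIntValued_quant _

lemma M_finite (k : ℕ) : (B.M k).Finite := by
  induction k with
  | zero => exact finite_empty
  | succ k ih =>
    refine ih.union ((Finite.subset ?_ sdiff_subset).image _)
    rw [quant_image_suppBall]
    exact intBall_finite (B.finite (k + 1) le_add_self) _

def extendTrunc (m : ℕ) (y : Linf Γ) : Linf Γ :=
  trunc (B.s (m + 1)) (restr (B.Γs (m + 1)) (B.i m y))

lemma norm_extendTrunc_le (y : Linf Γ) : ‖B.extendTrunc m y‖ ≤ B.s (m + 1) :=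
  norm_trunc_le (B.s_nonneg _) _

lemma norm_extendTrunc_sub_le (hm : 1 ≤ m) (y y' : Linf Γ) :
    ‖B.extendTrunc m y - B.extendTrunc m y'‖ ≤ B.lam * ‖y - y'‖ := by
  refine (norm_trunc_sub_trunc_le (B.s_nonneg _) _ _).trans ?_
  refine (norm_restr_sub_restr_le _ _ _).trans ?_
  rw [← map_sub]
  exact B.norm_i_apply_le hm _

lemma extendTrunc_restr {w : Linf Γ} (hw : B.i m (restr (B.Γs m) w) = w)
    (hnorm : ‖w‖ ≤ B.s (m + 1)) :
    B.extendTrunc m (restr (B.Γs m) w) = restr (B.Γs (m + 1)) w := by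
  rw [extendTrunc, hw, trunc_eq_self ((norm_restr_le _ w).trans hnorm)]

lemma quant_extendTrunc_mem_intBall (y : Linf Γ) :
    quant (B.extendTrunc m y) ∈ intBall (B.Γs (m + 1)) (B.s (m + 1)) := by
  refine ⟨isIntValued_quant _, fun γ hγ => ?_, (norm_quant_le _).trans (B.norm_extendTrunc_le y)⟩
  rw [quant_apply, extendTrunc, trunc_apply, restr_apply_of_notMem _ hγ,
    truncFun_eq_clampNear (B.s_nonneg _), _root_.clampNear_eq_self (by simp [B.s_nonneg]),
    ent_zero]

lemma mem_C {y : Linf Γ} (hy : y ∈ intBall (B.Γs m) (B.s (m + 1))) (hy' : B.s m < ‖y‖) :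
    quant (B.i (m + 1) (quant (B.extendTrunc m y))) ∈ B.C m := by
  refine ⟨y, ⟨(quant_image_suppBall (B.Γs m) _).symm ▸ hy, fun h => ?_⟩, rfl⟩
  rw [quant_image_suppBall] at h
  exact hy'.not_ge h.2.2

lemma exists_of_mem_C {z : Linf Γ} (hz : z ∈ B.C m) :
    ∃ y ∈ intBall (B.Γs m) (B.s (m + 1)), B.s m < ‖y‖ ∧
      z = quant (B.i (m + 1) (quant (B.extendTrunc m y))) := by
  obtain ⟨y, ⟨hy, hy'⟩, rfl⟩ := hz
  rw [quant_image_suppBall] at hy hy'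
  exact ⟨y, hy, lt_of_not_ge fun h => hy' ⟨hy.1, hy.2.1, h⟩, rfl⟩

lemma restr_of_mem_C (hm : 1 ≤ m) {y : Linf Γ} (hy : y ∈ intBall (B.Γs m) (B.s (m + 1))) :
    restr (B.Γs m) (quant (B.i (m + 1) (quant (B.extendTrunc m y)))) = y := by
  ext γ
  by_cases h : γ ∈ B.Γs m
  · have h' : γ ∈ B.Γs (m + 1) := B.Γs_subset_Γs hm m.le_succ h
    obtain ⟨k, hk⟩ := hy.1 γ
    rw [restr_apply_of_mem _ h, quant_apply, B.extension _ le_add_self _ γ h', quant_apply,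
      extendTrunc, trunc_apply, restr_apply_of_mem _ h', B.extension m hm y γ h,
      truncFun, if_pos ((abs_apply_le_norm y γ).trans hy.2.2), hk, ent_intCast, ent_intCast]
  · rw [restr_apply_of_notMem _ h, hy.2.1 γ h]

lemma norm_i_le_s_succ {l : ℕ} (hl : 1 ≤ l) {b : Linf Γ} (hb : ‖b‖ ≤ B.s l) :
    ‖B.i l b‖ ≤ B.s (l + 1) := by
  rw [B.s_succ]
  exact (B.norm_i_apply_le hl b).trans (mul_le_mul_of_nonneg_left hb (by positivity))

lemma norm_restr_le_s_of_mem_M (hm : 1 ≤ m) {u : Linf Γ} (hu : u ∈ B.M m) :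
    ‖restr (B.Γs m) u‖ ≤ B.s m := by
  obtain ⟨l, b, hl, hlm, -, hb, -, rfl⟩ := B.exists_fresh_rep hu
  rcases hlm.lt_or_eq with hlt | rfl
  · calc ‖restr (B.Γs m) (quant (B.i l b))‖ ≤ ‖B.i l b‖ :=
          (norm_restr_le _ _).trans (norm_quant_le _)
      _ ≤ B.s m := (B.norm_i_le_s_succ hl hb.2.2).trans (B.s_mono hlt)
  · rw [B.restr_quant_i hl hb]
    exact hb.2.2

lemma restr_injOn_M : InjOn (restr (B.Γs m)) (B.M m) := by
  intro u hu v hv huv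
  obtain ⟨lu, bu, hlu, hlum, huM, hbu, hfu, rfl⟩ := B.exists_fresh_rep hu
  obtain ⟨lv, bv, hlv, hlvm, hvM, hbv, hfv, rfl⟩ := B.exists_fresh_rep hv
  have hres : ∀ {l}, 1 ≤ l → l ≤ m →
      restr (B.Γs l) (quant (B.i lu bu)) = restr (B.Γs l) (quant (B.i lv bv)) := fun hl hlm => by
    rw [← restr_restr (B.Γs_subset_Γs hl hlm), huv, restr_restr (B.Γs_subset_Γs hl hlm)]
  -- freshness of the generators forces equal levels of first appearance
  rcases lt_trichotomy lu lv with h | rfl | h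
  · refine absurd ⟨_, B.M_mono (Nat.le_sub_one_of_lt h) huM, ?_⟩ hfv
    rw [hres hlv hlvm, B.restr_quant_i hlv hbv]
  · rw [← B.restr_quant_i hlu hbu, ← B.restr_quant_i hlu hbv, hres hlu hlum]
  · refine absurd ⟨_, B.M_mono (Nat.le_sub_one_of_lt h) hvM, ?_⟩ hfu
    rw [← hres hlu hlum, B.restr_quant_i hlu hbu]

lemma restr_injOn_D (hm : 1 ≤ m) : InjOn (restr (B.Γs m)) (B.D m) := by
  have hMC : ∀ u ∈ B.M m, ∀ v ∈ B.C m, restr (B.Γs m) u ≠ restr (B.Γs m) v := by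
    intro u hu v hv huv
    obtain ⟨y, hy, hy', rfl⟩ := B.exists_of_mem_C hv
    rw [B.restr_of_mem_C hm hy] at huv
    exact hy'.not_ge (huv ▸ B.norm_restr_le_s_of_mem_M hm hu)
  rintro u (hu | hu) v (hv | hv) huv
  · exact B.restr_injOn_M hu hv huv
  · exact absurd huv (hMC u hu v hv)
  · exact absurd huv.symm (hMC v hv u hu)
  · obtain ⟨y, hy, -, rfl⟩ := B.exists_of_mem_C hu
    obtain ⟨y', hy', -, rfl⟩ := B.exists_of_mem_C hv
    rw [B.restr_of_mem_C hm hy, B.restr_of_mem_C hm hy'] at huv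
    rw [huv]

lemma exists_generator (hm : 1 ≤ m) {u : Linf Γ} (hu : u ∈ B.D m) :
    ∃ w, u = quant w ∧ B.i (m + 1) (restr (B.Γs (m + 1)) w) = w ∧
      ‖restr (B.Γs (m + 1)) w‖ ≤ B.s (m + 1) ∧
      ‖restr (B.Γs (m + 1)) w - B.extendTrunc m (restr (B.Γs m) u)‖ ≤ B.lam := by
  rcases hu with hu | hu
  · obtain ⟨l, b, hl, hlm, -, hb, -, rfl⟩ := B.exists_fresh_rep hu
    have hw : ‖B.i l b‖ ≤ B.s (m + 1) := (B.norm_i_le_s_succ hl hb.2.2).trans (B.s_mono (by omega))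
    refine ⟨B.i l b, rfl, B.i_restr_i hl (by omega) hb.2.1, (norm_restr_le _ _).trans hw, ?_⟩
    rw [← B.extendTrunc_restr (B.i_restr_i hl hlm hb.2.1) hw]
    refine (B.norm_extendTrunc_sub_le hm _ _).trans ?_
    calc B.lam * ‖restr (B.Γs m) (B.i l b) - restr (B.Γs m) (quant (B.i l b))‖
        ≤ B.lam * ‖quant (B.i l b) - B.i l b‖ := by
          rw [norm_sub_rev (quant _)]
          exact mul_le_mul_of_nonneg_left (norm_restr_sub_restr_le _ _ _) (by positivity)
      _ ≤ B.lam := mul_le_of_le_one_right (by positivity) (norm_quant_sub_self_le _)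
  · obtain ⟨y, hy, -, rfl⟩ := B.exists_of_mem_C hu
    have hq := B.quant_extendTrunc_mem_intBall (m := m) y
    rw [B.restr_of_mem_C hm hy]
    refine ⟨_, rfl, ?_, ?_, ?_⟩ <;> rw [B.restr_i_of_support le_add_self hq.2.1]
    · exact hq.2.2
    · exact (norm_quant_sub_self_le _).trans B.one_le_lam_cast

lemma isIntValued_of_mem_D (hm : 1 ≤ m) {u : Linf Γ} (hu : u ∈ B.D m) : IsIntValued u := by
  obtain ⟨w, rfl, -⟩ := B.exists_generator hm hu
  exact isIntValued_quant w

lemma norm_sub_le_of_mem_D (hm : 1 ≤ m) {u v : Linf Γ} (hu : u ∈ B.D m) (hv : v ∈ B.D m) :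
    ‖u - v‖ ≤ B.lam ^ 2 * ‖restr (B.Γs m) u - restr (B.Γs m) v‖ + (2 * B.lam ^ 2 + 2) := by
  obtain ⟨w, rfl, hwi, -, hwu⟩ := B.exists_generator hm hu
  obtain ⟨w', rfl, hwi', -, hwv⟩ := B.exists_generator hm hv
  set E := B.extendTrunc m
  have hE := B.norm_extendTrunc_sub_le hm (restr (B.Γs m) (quant w)) (restr (B.Γs m) (quant w'))
  have hrestr : ‖restr (B.Γs (m + 1)) w - restr (B.Γs (m + 1)) w'‖ ≤
      B.lam * ‖restr (B.Γs m) (quant w) - restr (B.Γs m) (quant w')‖ + 2 * B.lam := by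
    have := dist_triangle4 (restr (B.Γs (m + 1)) w) (E (restr (B.Γs m) (quant w)))
      (E (restr (B.Γs m) (quant w'))) (restr (B.Γs (m + 1)) w')
    simp only [dist_eq_norm] at this
    rw [norm_sub_rev (E (restr (B.Γs m) (quant w')))] at this
    linarith
  have hlam := B.one_le_lam_cast
  calc ‖quant w - quant w'‖ ≤ ‖w - w'‖ + 2 := norm_quant_sub_quant_le w w'
    _ ≤ B.lam * ‖restr (B.Γs (m + 1)) w - restr (B.Γs (m + 1)) w'‖ + 2 := by
      have := B.norm_i_apply_le (Nat.le_add_left 1 m)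
        (restr (B.Γs (m + 1)) w - restr (B.Γs (m + 1)) w')
      rw [map_sub, hwi, hwi'] at this
      linarith
    _ ≤ _ := by nlinarith

lemma norm_restr_le_of_mem_D (hm : 1 ≤ m) {u : Linf Γ} (hu : u ∈ B.D m) :
    ‖restr (B.Γs (m + 1)) u‖ ≤ B.s (m + 1) := by
  obtain ⟨w, rfl, -, hw, -⟩ := B.exists_generator hm hu
  rw [restr_quant]
  exact (norm_quant_le _).trans hw

lemma norm_quant_i_restr_sub_le (hm : 1 ≤ m) {u : Linf Γ} (hu : u ∈ B.D m) :
    ‖quant (B.i (m + 1) (restr (B.Γs (m + 1)) u)) - u‖ ≤ B.lam + 2 := by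
  obtain ⟨w, rfl, hwi, -⟩ := B.exists_generator hm hu
  calc ‖quant (B.i (m + 1) (restr (B.Γs (m + 1)) (quant w))) - quant w‖
      ≤ ‖B.i (m + 1) (restr (B.Γs (m + 1)) (quant w)) - w‖ + 2 := norm_quant_sub_quant_le _ _
    _ ≤ B.lam * ‖quant w - w‖ + 2 := by
      have := B.norm_i_apply_le (Nat.le_add_left 1 m)
        (restr (B.Γs (m + 1)) (quant w) - restr (B.Γs (m + 1)) w)
      rw [map_sub, hwi] at this
      have := mul_le_mul_of_nonneg_left (norm_restr_sub_restr_le (B.Γs (m + 1)) (quant w) w)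
        (by positivity : (0 : ℝ) ≤ B.lam)
      linarith
    _ ≤ B.lam + 2 := by
      have := mul_le_of_le_one_right (by positivity : (0 : ℝ) ≤ B.lam) (norm_quant_sub_self_le w)
      linarith

lemma exists_mem_D_restr_eq (hm : 1 ≤ m) {z : Linf Γ} (hz : z ∈ B.M (m + 1)) :
    ∃ u ∈ B.D m, restr (B.Γs m) u = restr (B.Γs m) z := by
  by_cases hzM : z ∈ B.M m
  · exact ⟨z, Or.inl hzM, rfl⟩
  obtain ⟨b, hb, -, rfl⟩ := B.exists_of_mem_M_succ hz hzM
  have hy : restr (B.Γs m) (quant (B.i (m + 1) b)) ∈ intBall (B.Γs m) (B.s (m + 1)) := by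
    refine ⟨(isIntValued_quant _).restr _, fun γ hγ => restr_apply_of_notMem _ hγ, ?_⟩
    rw [← restr_restr (B.Γs_subset_Γs hm m.le_succ), B.restr_quant_i le_add_self hb]
    exact (norm_restr_le _ _).trans hb.2.2
  set y := restr (B.Γs m) (quant (B.i (m + 1) b))
  rcases le_or_gt ‖y‖ (B.s m) with hsmall | hbig
  · by_cases hmem : y ∈ restr (B.Γs m) '' B.M (m - 1)
    · obtain ⟨u, huM, hu⟩ := hmem
      exact ⟨u, Or.inl (B.M_mono (Nat.sub_le m 1) huM), hu⟩
    · obtain ⟨k, rfl⟩ : ∃ k, m = k + 1 := ⟨m - 1, by omega⟩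
      exact ⟨_, Or.inl (B.quant_i_mem_M_succ ⟨hy.1, hy.2.1, hsmall⟩ hmem),
        B.restr_quant_i hm hy⟩
  · exact ⟨_, Or.inr (B.mem_C hy hbig), B.restr_of_mem_C hm hy⟩

lemma restr_mem_intBall_of_mem_M_succ (hm : 1 ≤ m) {z : Linf Γ} (hz : z ∈ B.M (m + 1)) :
    restr (B.Γs (m + 1)) z ∈ intBall (B.Γs (m + 1)) (B.s (m + 1)) := by
  refine ⟨(B.isIntValued_of_mem_M hz).restr _, fun γ hγ => restr_apply_of_notMem _ hγ, ?_⟩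
  by_cases hzM : z ∈ B.M m
  · exact B.norm_restr_le_of_mem_D hm (Or.inl hzM)
  · obtain ⟨b, hb, -, rfl⟩ := B.exists_of_mem_M_succ hz hzM
    rw [B.restr_quant_i le_add_self hb]
    exact hb.2.2

lemma quant_i_restr_of_notMem_D {z : Linf Γ} (hz : z ∈ B.M (m + 1)) (hzD : z ∉ B.D m) :
    quant (B.i (m + 1) (restr (B.Γs (m + 1)) z)) = z := by
  obtain ⟨b, hb, -, rfl⟩ := B.exists_of_mem_M_succ hz fun h => hzD (Or.inl h)
  rw [B.restr_quant_i le_add_self hb]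

/-! ### Paths from `Ψ_n z` to `z` -/

section Path

variable (m)

/-- `Ψ_{m+1} = (r_m|_{D_m})⁻¹ ∘ r_m`. -/
def psi (z : Linf Γ) : Linf Γ :=
  Function.invFunOn (restr (B.Γs m)) (B.D m) (restr (B.Γs m) z)

def target (z : Linf Γ) : Linf Γ := restr (B.Γs (m + 1)) (B.psi m z)

def weight (z : Linf Γ) : ℕ := ⌈‖restr (B.Γs (m + 1)) z - B.target m z‖⌉₊

def clampRestr (z : Linf Γ) (c : ℕ) : Linf Γ :=
  Linf.clampNear (restr (B.Γs (m + 1)) z) (B.target m z) c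

def clampPoint (z : Linf Γ) (c : ℕ) : Linf Γ := quant (B.i (m + 1) (B.clampRestr m z c))

def path (z : Linf Γ) (c : ℕ) : Linf Γ := if c = 0 then B.psi m z else B.clampPoint m z c

def pathDist (z w : Linf Γ) : ℝ :=
  ‖restr (B.Γs (m + 1)) z - restr (B.Γs (m + 1)) w‖ + ‖B.target m z - B.target m w‖

variable {B m} {z w u : Linf Γ} {c : ℕ}

lemma psi_spec (hm : 1 ≤ m) (hz : z ∈ B.M (m + 1)) :
    B.psi m z ∈ B.D m ∧ restr (B.Γs m) (B.psi m z) = restr (B.Γs m) z :=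
  Function.invFunOn_pos (B.exists_mem_D_restr_eq hm hz)

lemma psi_eq_of_restr_eq (hm : 1 ≤ m) (hu : u ∈ B.D m)
    (h : restr (B.Γs m) u = restr (B.Γs m) z) : B.psi m z = u := by
  rw [psi, ← h]
  exact (B.restr_injOn_D hm).leftInvOn_invFunOn hu

lemma psi_eq_self (hm : 1 ≤ m) (hz : z ∈ B.D m) : B.psi m z = z := psi_eq_of_restr_eq hm hz rfl

lemma target_eq_of_restr_eq (hm : 1 ≤ m) (hu : u ∈ B.D m)
    (h : restr (B.Γs m) u = restr (B.Γs m) z) : B.target m z = restr (B.Γs (m + 1)) u := by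
  rw [target, psi_eq_of_restr_eq hm hu h]

lemma target_mem_intBall (hm : 1 ≤ m) (hz : z ∈ B.M (m + 1)) :
    B.target m z ∈ intBall (B.Γs (m + 1)) (B.s (m + 1)) :=
  ⟨(B.isIntValued_of_mem_D hm (psi_spec hm hz).1).restr _,
    fun _ hγ => restr_apply_of_notMem _ hγ, B.norm_restr_le_of_mem_D hm (psi_spec hm hz).1⟩

lemma target_apply_of_mem (hm : 1 ≤ m) (hz : z ∈ B.M (m + 1)) {γ : Γ} (hγ : γ ∈ B.Γs m) :
    B.target m z γ = restr (B.Γs (m + 1)) z γ := by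
  have h := congrArg (· γ) (psi_spec hm hz).2
  have hγ' := B.Γs_subset_Γs hm m.le_succ hγ
  simp only [restr_apply_of_mem _ hγ] at h
  rw [target, restr_apply_of_mem _ hγ', restr_apply_of_mem _ hγ', h]

lemma clampRestr_mem_intBall (hm : 1 ≤ m) (hz : z ∈ B.M (m + 1)) (c : ℕ) :
    B.clampRestr m z c ∈ intBall (B.Γs (m + 1)) (B.s (m + 1)) := by
  have hy := B.restr_mem_intBall_of_mem_M_succ hm hz
  have ht := target_mem_intBall hm hz
  refine ⟨hy.1.clampNear ht.1 c, fun γ hγ => ?_,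
    Linf.norm_clampNear_le c.cast_nonneg hy.2.2 ht.2.2⟩
  rw [clampRestr, Linf.clampNear_apply_of_apply_eq c.cast_nonneg (by rw [hy.2.1 γ hγ, ht.2.1 γ hγ]),
    hy.2.1 γ hγ]

lemma restr_clampRestr (hm : 1 ≤ m) (hz : z ∈ B.M (m + 1)) :
    restr (B.Γs m) (B.clampRestr m z c) = restr (B.Γs m) z := by
  rw [← restr_restr (B.Γs_subset_Γs hm m.le_succ) z]
  ext γ
  by_cases hγ : γ ∈ B.Γs m
  · rw [restr_apply_of_mem _ hγ, restr_apply_of_mem _ hγ, clampRestr,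
      Linf.clampNear_apply_of_apply_eq c.cast_nonneg (target_apply_of_mem hm hz hγ).symm]
  · rw [restr_apply_of_notMem _ hγ, restr_apply_of_notMem _ hγ]

lemma restr_clampPoint (hm : 1 ≤ m) (hz : z ∈ B.M (m + 1)) :
    restr (B.Γs (m + 1)) (B.clampPoint m z c) = B.clampRestr m z c :=
  B.restr_quant_i le_add_self (clampRestr_mem_intBall hm hz c)

lemma path_zero : B.path m z 0 = B.psi m z := if_pos rfl

lemma path_of_ne_zero (hc : c ≠ 0) : B.path m z c = B.clampPoint m z c := if_neg hc

lemma restr_path (hm : 1 ≤ m) (hz : z ∈ B.M (m + 1)) :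
    restr (B.Γs m) (B.path m z c) = restr (B.Γs m) z := by
  rcases eq_or_ne c 0 with rfl | hc
  · exact (psi_spec hm hz).2
  · rw [path_of_ne_zero hc, ← restr_restr (B.Γs_subset_Γs hm m.le_succ), restr_clampPoint hm hz,
      restr_clampRestr hm hz]

lemma psi_path (hm : 1 ≤ m) (hz : z ∈ B.M (m + 1)) : B.psi m (B.path m z c) = B.psi m z := by
  rw [psi, psi, restr_path hm hz]

lemma target_path (hm : 1 ≤ m) (hz : z ∈ B.M (m + 1)) :
    B.target m (B.path m z c) = B.target m z := by
  rw [target, target, psi_path hm hz]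

lemma exists_abs_clampRestr_sub_target_eq (hm : 1 ≤ m) (hz : z ∈ B.M (m + 1)) (hc : 1 ≤ c)
    (hcw : c ≤ B.weight m z) : ∃ γ, |B.clampRestr m z c γ - B.target m z γ| = c := by
  refine Linf.exists_abs_clampNear_sub_eq
    (((B.isIntValued_of_mem_M hz).restr _).sub (target_mem_intBall hm hz).1) hc ?_
  have := Nat.lt_ceil.1 (Nat.sub_one_lt_of_le hc hcw)
  rwa [Nat.cast_sub hc, Nat.cast_one] at this

lemma clampRestr_ne_target (hm : 1 ≤ m) (hz : z ∈ B.M (m + 1)) (hc : 1 ≤ c)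
    (hcw : c ≤ B.weight m z) : B.clampRestr m z c ≠ B.target m z := fun h => by
  obtain ⟨γ, hγ⟩ := exists_abs_clampRestr_sub_target_eq hm hz hc hcw
  rw [h, sub_self, abs_zero] at hγ
  exact absurd hγ.symm (by exact_mod_cast (by omega : c ≠ 0))

lemma weight_path (hm : 1 ≤ m) (hz : z ∈ B.M (m + 1)) (hc : 1 ≤ c) (hcw : c ≤ B.weight m z) :
    B.weight m (B.path m z c) = c := by
  rw [weight, target_path hm hz, path_of_ne_zero (by omega), restr_clampPoint hm hz]
  refine le_antisymm (Nat.ceil_le.2 (Linf.norm_clampNear_sub_le c.cast_nonneg)) ?_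
  obtain ⟨γ, hγ⟩ := exists_abs_clampRestr_sub_target_eq hm hz hc hcw
  have := hγ ▸ abs_apply_sub_le_norm (B.clampRestr m z c) (B.target m z) γ
  exact_mod_cast this.trans (Nat.le_ceil _)

lemma restr_path_of_ne_zero (hm : 1 ≤ m) (hz : z ∈ B.M (m + 1)) (hc : c ≠ 0) :
    restr (B.Γs (m + 1)) (B.path m z c) = B.clampRestr m z c := by
  rw [path_of_ne_zero hc, restr_clampPoint hm hz]

lemma path_mem (hm : 1 ≤ m) (hz : z ∈ B.M (m + 1)) (hc : 1 ≤ c) (hcw : c ≤ B.weight m z) :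
    B.path m z c ∈ B.M (m + 1) \ B.D m := by
  have hne := clampRestr_ne_target hm hz hc hcw
  have hr : restr (B.Γs m) (B.path m z c) = restr (B.Γs m) z := restr_path hm hz
  rw [path_of_ne_zero (by omega)] at hr ⊢
  refine ⟨B.quant_i_mem_M_succ (clampRestr_mem_intBall hm hz c) ?_, fun hD => hne ?_⟩
  · rintro ⟨u, huM, hu⟩
    refine hne (hu ▸ (target_eq_of_restr_eq hm (Or.inl huM) ?_).symm)
    rw [← restr_restr (B.Γs_subset_Γs hm m.le_succ) u, hu, restr_clampRestr hm hz]
  · rw [target_eq_of_restr_eq hm hD hr, restr_clampPoint hm hz]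

lemma path_path (hm : 1 ≤ m) (hz : z ∈ B.M (m + 1)) {c' : ℕ} (hc : c ≠ 0) (hc' : c' ≤ c) :
    B.path m (B.path m z c) c' = B.path m z c' := by
  rcases eq_or_ne c' 0 with rfl | hc'0
  · rw [path_zero, path_zero, psi_path hm hz]
  · rw [path_of_ne_zero hc'0, path_of_ne_zero hc'0, clampPoint, clampPoint, clampRestr,
      restr_path_of_ne_zero hm hz hc, target_path hm hz, clampRestr, clampRestr,
      Linf.clampNear_clampNear c'.cast_nonneg (by exact_mod_cast hc')]

lemma isRetractionPath (hm : 1 ≤ m) :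
    IsRetractionPath (B.D m) (B.M (m + 1)) (B.path m) (B.weight m) where
  start_mem _ hz := (psi_spec hm hz).1
  start_eq_self _ hz := psi_eq_self hm hz
  mem_of_pos _ hz _ hc hcw := path_mem hm hz.1 hc hcw
  weight_eq _ hz _ hc hcw := weight_path hm hz.1 hc hcw
  path_path _ hz _ _ hc _ hc' := path_path hm hz.1 hc.ne' hc'

lemma path_zero_spec (hm : 1 ≤ m) (hz : z ∈ B.M (m + 1)) :
    B.path m z 0 ∈ B.D m ∧ restr (B.Γs m) (B.path m z 0) = restr (B.Γs m) z :=
  path_zero (B := B) ▸ psi_spec hm hz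

lemma norm_path_sub_clampPoint_le (hm : 1 ≤ m) (hz : z ∈ B.M (m + 1)) (c : ℕ) :
    ‖B.path m z c - B.clampPoint m z c‖ ≤ B.lam + 2 := by
  rcases eq_or_ne c 0 with rfl | hc
  · rw [path_zero, clampPoint, clampRestr, Nat.cast_zero, Linf.clampNear_zero, target,
      norm_sub_rev]
    exact B.norm_quant_i_restr_sub_le hm (psi_spec hm hz).1
  · rw [path_of_ne_zero hc, sub_self, norm_zero]
    positivity

lemma pathDist_comm (z w : Linf Γ) : B.pathDist m z w = B.pathDist m w z := by
  rw [pathDist, pathDist, norm_sub_rev (restr _ z), norm_sub_rev (B.target m z)]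

lemma pathDist_nonneg (z w : Linf Γ) : 0 ≤ B.pathDist m z w := by
  unfold pathDist
  positivity

lemma norm_clampPoint_sub_clampPoint_le (c c' : ℕ) :
    ‖B.clampPoint m z c - B.clampPoint m w c'‖ ≤
      B.lam * (B.pathDist m z w + |(c : ℝ) - c'|) + 2 := by
  have hi := B.norm_i_apply_le (Nat.le_add_left 1 m) (B.clampRestr m z c - B.clampRestr m w c')
  have hcl : ‖B.clampRestr m z c - B.clampRestr m w c'‖ ≤ B.pathDist m z w + |(c : ℝ) - c'| :=
    Linf.norm_clampNear_sub_clampNear_le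
  rw [map_sub] at hi
  have := norm_quant_sub_quant_le (B.i (m + 1) (B.clampRestr m z c))
    (B.i (m + 1) (B.clampRestr m w c'))
  have := mul_le_mul_of_nonneg_left hcl (by positivity : (0 : ℝ) ≤ B.lam)
  rw [clampPoint, clampPoint]
  linarith

lemma norm_target_sub_target_le (hm : 1 ≤ m) (hz : z ∈ B.M (m + 1)) (hw : w ∈ B.M (m + 1)) :
    ‖B.target m z - B.target m w‖ ≤ B.lam ^ 2 * ‖z - w‖ + (2 * B.lam ^ 2 + 2) := by
  have h := B.norm_sub_le_of_mem_D hm (psi_spec hm hz).1 (psi_spec hm hw).1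
  rw [(psi_spec hm hz).2, (psi_spec hm hw).2] at h
  have := mul_le_mul_of_nonneg_left (norm_restr_sub_restr_le (B.Γs m) z w)
    (by positivity : (0 : ℝ) ≤ B.lam ^ 2)
  have := norm_restr_sub_restr_le (B.Γs (m + 1)) (B.psi m z) (B.psi m w)
  rw [target, target]
  linarith

lemma pathDist_le (hm : 1 ≤ m) (hz : z ∈ B.M (m + 1)) (hw : w ∈ B.M (m + 1)) :
    B.pathDist m z w ≤ (1 + B.lam ^ 2) * ‖z - w‖ + (2 * B.lam ^ 2 + 2) := by
  have := norm_restr_sub_restr_le (B.Γs (m + 1)) z w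
  have := norm_target_sub_target_le hm hz hw
  rw [pathDist]
  linarith

lemma target_eq_restr_of_mem_D (hm : 1 ≤ m) (hz : z ∈ B.D m) :
    B.target m z = restr (B.Γs (m + 1)) z := by
  rw [target, psi_eq_self hm hz]

lemma clampPoint_eq_self (hz : z ∈ B.M (m + 1)) (hzD : z ∉ B.D m) (hc : B.weight m z ≤ c) :
    B.clampPoint m z c = z := by
  have h : ‖restr (B.Γs (m + 1)) z - B.target m z‖ ≤ c :=
    (Nat.le_ceil _).trans (by exact_mod_cast hc)
  rw [clampPoint, clampRestr, Linf.clampNear_eq_self h, B.quant_i_restr_of_notMem_D hz hzD]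

lemma weight_le_pathDist_add_one (hm : 1 ≤ m) (hz : z ∈ B.D m) (w : Linf Γ) :
    (B.weight m w : ℝ) ≤ B.pathDist m z w + 1 := by
  have hlt : (B.weight m w : ℝ) < ‖restr (B.Γs (m + 1)) w - B.target m w‖ + 1 :=
    Nat.ceil_lt_add_one (norm_nonneg _)
  have : ‖restr (B.Γs (m + 1)) w - B.target m w‖ ≤ B.pathDist m z w :=
    calc _ = ‖(B.target m z - B.target m w) -
          (restr (B.Γs (m + 1)) z - restr (B.Γs (m + 1)) w)‖ := by
          rw [target_eq_restr_of_mem_D hm hz]; congr 1; abel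
      _ ≤ _ := (norm_sub_le _ _).trans_eq (add_comm _ _)
  linarith

end Path

/-! ### The Lipschitz estimate -/

section Lipschitz

variable {B} {F : ℕ → Set (Linf Γ)} {i : ℕ} {z w : Linf Γ}

local notation "Ψ" => pathRetraction (BD.path B m) (BD.weight B m) F

lemma norm_sub_le_of_near_clampPoint {a b : Linf Γ} {cz cw : ℕ}
    (ha : ‖a - B.clampPoint m z cz‖ ≤ B.lam + 2) (hb : ‖b - B.clampPoint m w cw‖ ≤ B.lam + 2)
    (hc : |(cz : ℝ) - cw| ≤ B.pathDist m z w + 1) :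
    ‖a - b‖ ≤ 2 * B.lam * B.pathDist m z w + 3 * B.lam + 6 := by
  have hQ := norm_clampPoint_sub_clampPoint_le (B := B) (m := m) (z := z) (w := w) cz cw
  have := dist_triangle4 a (B.clampPoint m z cz) (B.clampPoint m w cw) b
  simp only [dist_eq_norm] at this
  rw [norm_sub_rev (B.clampPoint m w cw) b] at this
  have := mul_le_mul_of_nonneg_left hc (by positivity : (0 : ℝ) ≤ B.lam)
  linarith

variable (hm : 1 ≤ m) (hF : IsSortedFiltration (B.D m) (B.M (m + 1)) (B.weight m) F)
include hm hF

lemma exists_level_of_notMem (hz : z ∈ B.M (m + 1)) (hw : w ∈ B.M (m + 1) \ F i) :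
    ∃ cz : ℕ, ‖Ψ i z - B.clampPoint m z cz‖ ≤ B.lam + 2 ∧
      |(cz : ℝ) - stopLevel (B.path m) (B.weight m) F i w| ≤ B.pathDist m z w + 1 := by
  have hP := B.isRetractionPath hm
  have hS := pathDist_nonneg (B := B) (m := m) z w
  by_cases hzF : z ∈ F i
  · rw [pathRetraction_of_mem hzF]
    by_cases hzD : z ∈ B.D m
    · refine ⟨0, by simpa [path_zero, psi_eq_self hm hzD] using
        norm_path_sub_clampPoint_le hm hz 0, ?_⟩
      have hcw : stopLevel (B.path m) (B.weight m) F i w ≤ B.weight m w := stopLevel_le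
      rw [Nat.cast_zero, zero_sub, abs_neg, abs_of_nonneg (Nat.cast_nonneg _)]
      exact (Nat.cast_le.2 hcw).trans (weight_le_pathDist_add_one hm hzD w)
    · refine ⟨max (stopLevel (B.path m) (B.weight m) F i w) (B.weight m z), ?_, ?_⟩
      · rw [clampPoint_eq_self hz hzD (le_max_right _ _), sub_self, norm_zero]
        positivity
      · have := abs_natCast_sub_natCast_le_one
          (max_le (Nat.le_succ _) (weight_le_stopLevel_succ hP hF hw ⟨hzF, hzD⟩))
          ((le_max_left _ _).trans (Nat.le_succ _))
        linarith
  · refine ⟨_, by rw [pathRetraction_of_notMem hzF]; exact norm_path_sub_clampPoint_le hm hz _, ?_⟩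
    have := abs_natCast_sub_natCast_le_one (stopLevel_le_stopLevel_succ hP hF ⟨hz, hzF⟩ hw)
      (stopLevel_le_stopLevel_succ hP hF hw ⟨hz, hzF⟩)
    linarith

lemma norm_pathRetraction_sub_le_of_notMem (hz : z ∈ B.M (m + 1)) (hw : w ∈ B.M (m + 1))
    (hzw : z ∉ F i ∨ w ∉ F i) :
    ‖Ψ i z - Ψ i w‖ ≤ 2 * B.lam * B.pathDist m z w + 3 * B.lam + 6 := by
  rcases hzw with hzF | hwF
  · rw [norm_sub_rev, pathDist_comm]
    obtain ⟨cw, hcw, hc⟩ := exists_level_of_notMem hm hF hw ⟨hz, hzF⟩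
    refine norm_sub_le_of_near_clampPoint hcw ?_ hc
    rw [pathRetraction_of_notMem hzF]
    exact norm_path_sub_clampPoint_le hm hz _
  · obtain ⟨cz, hcz, hc⟩ := exists_level_of_notMem hm hF hz ⟨hw, hwF⟩
    refine norm_sub_le_of_near_clampPoint hcz ?_ hc
    rw [pathRetraction_of_notMem hwF]
    exact norm_path_sub_clampPoint_le hm hw _

theorem norm_pathRetraction_sub_le (hz : z ∈ B.M (m + 1)) (hw : w ∈ B.M (m + 1)) :
    ‖Ψ i z - Ψ i w‖ ≤
      ((3 * (B.lam : ℝ) + 2) * (3 * (B.lam : ℝ) ^ 2 + 6 * (B.lam : ℝ) + 11)) * ‖z - w‖ := by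
  have hl := B.one_le_lam_cast
  by_cases hzw : z = w
  · simp [hzw]
  have hd := one_le_norm_sub_of_isIntValued (B.isIntValued_of_mem_M hz)
    (B.isIntValued_of_mem_M hw) hzw
  by_cases hF' : z ∈ F i ∧ w ∈ F i
  · rw [pathRetraction_of_mem hF'.1, pathRetraction_of_mem hF'.2]
    exact le_mul_of_one_le_left (norm_nonneg _) (by nlinarith)
  have hv := norm_pathRetraction_sub_le_of_notMem hm hF hz hw (not_and_or.1 hF')
  have hS := pathDist_le hm hz hw
  set l : ℝ := (B.lam : ℝ)
  set d := ‖z - w‖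
  have h1 : ‖Ψ i z - Ψ i w‖ ≤ (2 * l + 2 * l ^ 3) * d + (4 * l ^ 3 + 7 * l + 6) := by
    nlinarith [pathDist_nonneg (B := B) (m := m) z w]
  nlinarith [mul_le_mul_of_nonneg_left hd (by positivity : (0:ℝ) ≤ 4 * l ^ 3 + 7 * l + 6),
    mul_le_mul_of_nonneg_right hl (by linarith : (0:ℝ) ≤ d), sq_nonneg l,
    mul_pos (by linarith : (0:ℝ) < l) (by linarith : (0:ℝ) < d)]

end Lipschitz

end BD

/-- Proposition 7 (`step3`): for every `n ≥ 2` there are an enumeration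
`(x_i)_{i=1}^{i(n)}` of `M_n \ D_{n-1}` and retractions
`Ψ_{n,i} : M_n → D_{n-1} ∪ {x_1,…,x_i}` (for `0 ≤ i ≤ i(n)-1`) such that
`Ψ_{n,i₁} ∘ Ψ_{n,i₂} = Ψ_{n,min(i₁,i₂)}`, `Ψ_{n,0} = Ψ_n = (r_{n-1}|_{D_{n-1}})⁻¹ ∘ r_{n-1}`
(encoded by `Ψ 0 z ∈ D_{n-1}` and `r_{n-1}(Ψ 0 z) = r_{n-1} z`), and every `Ψ_{n,i}` is
`K`-Lipschitz with `K = (3λ+2)(3λ²+6λ+11)` independent of `i` and `n`. -/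
theorem step3_retractions (B : BD Γ) (n : ℕ) (hn : 2 ≤ n) :
    ∃ (N : ℕ) (x : ℕ → Linf Γ) (Ψ : ℕ → Linf Γ → Linf Γ),
      Set.InjOn x (Set.Icc 1 N) ∧
      x '' Set.Icc 1 N = B.M n \ B.D (n - 1) ∧
      (∀ i, i < N → ∀ z ∈ B.M n, Ψ i z ∈ B.D (n - 1) ∪ x '' Set.Icc 1 i) ∧
      (∀ i, i < N → ∀ z ∈ B.D (n - 1) ∪ x '' Set.Icc 1 i, Ψ i z = z) ∧
      (∀ i₁ i₂, i₁ < N → i₂ < N → ∀ z ∈ B.M n, Ψ i₁ (Ψ i₂ z) = Ψ (min i₁ i₂) z) ∧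
      (∀ z ∈ B.M n, Ψ 0 z ∈ B.D (n - 1) ∧
        restr (B.Γs (n - 1)) (Ψ 0 z) = restr (B.Γs (n - 1)) z) ∧
      (∀ i, i < N → ∀ z ∈ B.M n, ∀ w ∈ B.M n,
        ‖Ψ i z - Ψ i w‖ ≤
          ((3 * (B.lam : ℝ) + 2) * (3 * (B.lam : ℝ) ^ 2 + 6 * (B.lam : ℝ) + 11)) * ‖z - w‖) := by
  obtain ⟨m, rfl⟩ : ∃ m, n = m + 1 := ⟨n - 1, by omega⟩
  have hm : 1 ≤ m := by omega
  rw [Nat.add_sub_cancel]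
  obtain ⟨N, x, hinj, himg, hmono⟩ :=
    ((B.M_finite (m + 1)).sdiff (t := B.D m)).exists_enum_monotoneOn (B.weight m)
  have hP := B.isRetractionPath hm
  have hF := isSortedFiltration_of_enum himg hmono
  refine ⟨N, x, pathRetraction (B.path m) (B.weight m) (fun i => B.D m ∪ x '' Icc 1 i), hinj, himg,
    fun i _ z hz => pathRetraction_mem hP hF hz, fun i _ z hz => pathRetraction_of_mem hz,
    fun i₁ i₂ _ _ z hz => pathRetraction_pathRetraction hP hF hz, fun z hz => ?_,
    fun i _ z hz w hw => BD.norm_pathRetraction_sub_le hm hF hz hw⟩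
  rw [pathRetraction_zero hP hF hz]
  exact BD.path_zero_spec hm hz
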